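/- Let k be a field, let (L, K, M) be a field correspondence over k, let Ω be an algebraically closed field extension of k of transcendence degree 1, and fix a k-algebra embedding PQ : M → Ω with restrictions P = PQ|_L and Q = PQ|_K. Let E_∞ ⊆ Ω be the minimal subfield of Ω containing PQ(M) that is Galois over both P(L) and Q(K) (the union of the alternating tower of Galois closures). Suppose τ is a k-algebra automorphism of M with τ ∘ τ = id and τ(L) = K (hence τ(K) = L). Then there exists a k-algebra automorphism σ of E_∞ such that σ(PQ(x)) = PQ(τ(x)) for all x ∈ M. -/

import Mathlib

/-!
Since `M` and `Ω` both have transcendence degree one over `k`, `Ω` is algebraic over `PQ(M)`.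
As `Ω` is algebraically closed, the automorphism of `PQ(M)` induced by `τ` therefore extends to
a `k`-endomorphism `φ` of `Ω`, and algebraicity makes `φ` surjective. As `τ(L) = K` and, `τ`
being an involution, `τ(K) = L`, the map `φ` exchanges `P(L)` and `Q(K)`; it also preserves
`PQ(M)`. So it carries the alternating tower of Galois closures over `(Q(K), P(L))` onto the
tower over `(P(L), Q(K))`. The two towers interleave, hence have the same union `E_∞`, and `φ`
restricts to an automorphism of `E_∞`.
-/

/-- A field extension `F/k` has transcendence degree one iff some single element
forms a transcendence basis of `F` over `k`. -/
def HasTrdegOne (k F : Type*) [Field k] [Field F] [Algebra k F] : Prop :=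
  ∃ x : F, IsTranscendenceBasis k (fun _ : Unit => x)

/-- The Galois (= normal) closure inside `Ω` of the subfield `F` over the subfield `B`. -/
noncomputable def galoisClosureOver {k Ω : Type*} [Field k] [Field Ω] [Algebra k Ω]
    (B F : IntermediateField k Ω) : IntermediateField k Ω :=
  ⨆ σ : {σ : Ω →ₐ[k] Ω // ∀ x ∈ B, σ x = x}, F.map σ.1

/-- The alternating tower of Galois closures over `B₁`, `B₂` starting from `F₀`. -/
noncomputable def altTower {k Ω : Type*} [Field k] [Field Ω] [Algebra k Ω]
    (B₁ B₂ F₀ : IntermediateField k Ω) : ℕ → IntermediateField k Ω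
  | 0 => F₀
  | n + 1 => galoisClosureOver (if n % 2 = 0 then B₁ else B₂) (altTower B₁ B₂ F₀ n)

/-- `E_∞`: the union of the alternating tower of Galois closures, the minimal subfield of
`Ω` containing `PQ(M)` that is Galois over both `P(L)` and `Q(K)`. -/
noncomputable def Einfty {k M Ω : Type*} [Field k] [Field M] [Algebra k M]
    [Field Ω] [Algebra k Ω] (L K : IntermediateField k M) (PQ : M →ₐ[k] Ω) :
    IntermediateField k Ω :=
  ⨆ n : ℕ, altTower (PQ.comp K.val).fieldRange (PQ.comp L.val).fieldRange
    PQ.fieldRange (n + 1)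

open IntermediateField

section AlternatingTower

variable {k Ω : Type*} [Field k] [Field Ω] [Algebra k Ω]

theorem le_galoisClosureOver (B F : IntermediateField k Ω) : F ≤ galoisClosureOver B F :=
  le_iSup_of_le ⟨AlgHom.id k Ω, fun _ _ => rfl⟩ (map_id F).ge

theorem galoisClosureOver_mono (B : IntermediateField k Ω) {F F' : IntermediateField k Ω}
    (h : F ≤ F') : galoisClosureOver B F ≤ galoisClosureOver B F' :=
  iSup_le fun σ => le_iSup_of_le σ (map_mono σ.1 h)

theorem map_galoisClosureOver (φ : Ω ≃ₐ[k] Ω) (B F : IntermediateField k Ω) :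
    (galoisClosureOver B F).map φ.toAlgHom
      = galoisClosureOver (B.map φ.toAlgHom) (F.map φ.toAlgHom) := by
  rw [galoisClosureOver, IntermediateField.map_iSup, galoisClosureOver]
  apply le_antisymm
  · refine iSup_le fun σ => le_iSup_of_le ⟨φ.toAlgHom.comp (σ.1.comp φ.symm.toAlgHom), ?_⟩ ?_
    · rintro _ ⟨b, hb, rfl⟩
      simp [σ.2 b hb]
    · rw [map_map, map_map]
      exact (congrArg (fun g => map g F) (AlgHom.ext fun x => by simp)).le
  · refine iSup_le fun σ => le_iSup_of_le ⟨φ.symm.toAlgHom.comp (σ.1.comp φ.toAlgHom), ?_⟩ ?_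
    · intro b hb
      simp [σ.2 (φ b) ⟨b, hb, rfl⟩]
    · rw [map_map, map_map]
      exact (congrArg (fun g => map g F) (AlgHom.ext fun x => by simp)).le

theorem map_altTower (φ : Ω ≃ₐ[k] Ω) (B₁ B₂ F₀ : IntermediateField k Ω) (n : ℕ) :
    (altTower B₁ B₂ F₀ n).map φ.toAlgHom
      = altTower (B₁.map φ.toAlgHom) (B₂.map φ.toAlgHom) (F₀.map φ.toAlgHom) n := by
  induction n with
  | zero => rfl
  | succ n ih => rw [altTower, altTower, map_galoisClosureOver, ih, apply_ite (map φ.toAlgHom)]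

theorem altTower_swap_le_succ (B₁ B₂ F₀ : IntermediateField k Ω) :
    ∀ n, altTower B₂ B₁ F₀ n ≤ altTower B₁ B₂ F₀ (n + 1)
  | 0 => le_galoisClosureOver _ _
  | n + 1 => by
    have hbase : (if (n + 1) % 2 = 0 then B₁ else B₂) = if n % 2 = 0 then B₂ else B₁ := by
      split_ifs <;> first | rfl | omega
    show galoisClosureOver _ (altTower B₂ B₁ F₀ n) ≤ galoisClosureOver _ (altTower B₁ B₂ F₀ (n + 1))
    rw [hbase]
    exact galoisClosureOver_mono _ (altTower_swap_le_succ B₁ B₂ F₀ n)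

theorem le_iSup_altTower (B₁ B₂ F₀ : IntermediateField k Ω) :
    F₀ ≤ ⨆ n : ℕ, altTower B₁ B₂ F₀ (n + 1) :=
  le_iSup_of_le 0 (le_galoisClosureOver _ _)

theorem iSup_altTower_swap (B₁ B₂ F₀ : IntermediateField k Ω) :
    ⨆ n : ℕ, altTower B₂ B₁ F₀ (n + 1) = ⨆ n : ℕ, altTower B₁ B₂ F₀ (n + 1) := by
  have key : ∀ B B' : IntermediateField k Ω,
      ⨆ n : ℕ, altTower B' B F₀ (n + 1) ≤ ⨆ n : ℕ, altTower B B' F₀ (n + 1) :=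
    fun B B' => iSup_le fun n => le_iSup_of_le (n + 1) (altTower_swap_le_succ B B' F₀ (n + 1))
  exact le_antisymm (key B₁ B₂) (key B₂ B₁)

theorem map_iSup_altTower_of_swap (φ : Ω ≃ₐ[k] Ω) {B₁ B₂ F₀ : IntermediateField k Ω}
    (h₁ : B₁.map φ.toAlgHom = B₂) (h₂ : B₂.map φ.toAlgHom = B₁)
    (h₀ : F₀.map φ.toAlgHom = F₀) :
    (⨆ n : ℕ, altTower B₁ B₂ F₀ (n + 1)).map φ.toAlgHom = ⨆ n : ℕ, altTower B₁ B₂ F₀ (n + 1) := by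
  simp only [IntermediateField.map_iSup, map_altTower, h₁, h₂, h₀]
  exact iSup_altTower_swap B₁ B₂ F₀

end AlternatingTower

section Extension

variable {k M Ω : Type*} [Field k] [Field M] [Algebra k M] [Field Ω] [Algebra k Ω]

theorem isAlgebraic_fieldRange_of_hasTrdegOne (hM : HasTrdegOne k M) (hΩ : HasTrdegOne k Ω)
    (f : M →ₐ[k] Ω) : Algebra.IsAlgebraic f.fieldRange Ω := by
  obtain ⟨x, hx⟩ := hM
  obtain ⟨_, ht⟩ := hΩ
  have hfx : IsTranscendenceBasis k (f ∘ fun _ : Unit => x) :=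
    (hx.1.map' f.injective).isTranscendenceBasis_of_lift_trdeg_le_of_finite
      ht.lift_cardinalMk_eq_trdeg.ge
  have hle : adjoin k (Set.range (f ∘ fun _ : Unit => x)) ≤ f.fieldRange := by
    rw [adjoin_le_iff]
    rintro _ ⟨_, rfl⟩
    exact ⟨x, rfl⟩
  have := hfx.isAlgebraic_field
  exact ⟨fun z => (Algebra.IsAlgebraic.isAlgebraic z).tower_top_of_subalgebra_le
    (A := (adjoin k _).toSubalgebra) (B := f.fieldRange.toSubalgebra) hle⟩

theorem bijective_of_forall_mem_apply_eq {R : IntermediateField k Ω} [Algebra.IsAlgebraic R Ω]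
    (χ : Ω →ₐ[k] Ω) (hχ : ∀ r ∈ R, χ r = r) : Function.Bijective χ :=
  Algebra.IsAlgebraic.algHom_bijective (K := R)
    { χ.toRingHom with commutes' := fun r => hχ r r.2 }

variable [IsAlgClosed Ω] (f : M →ₐ[k] Ω) [Algebra.IsAlgebraic f.fieldRange Ω]

theorem exists_algHom_comp_eq (g : M →ₐ[k] Ω) : ∃ φ : Ω →ₐ[k] Ω, φ.comp f = g := by
  obtain ⟨φ, hφ⟩ := IsAlgClosed.surjective_domRestrict_of_isAlgebraic (K := k)
    (L := f.fieldRange) (E := Ω) (M := Ω) (g.comp f.equivFieldRange.symm.toAlgHom)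
  refine ⟨φ, AlgHom.ext fun m => ?_⟩
  simpa [AlgHom.domRestrict] using DFunLike.congr_fun hφ (f.equivFieldRange m)

theorem exists_algEquiv_apply_eq (τ : M ≃ₐ[k] M) : ∃ φ : Ω ≃ₐ[k] Ω, ∀ m, φ (f m) = f (τ m) := by
  obtain ⟨φ, hφ⟩ := exists_algHom_comp_eq f (f.comp τ.toAlgHom)
  obtain ⟨ψ, hψ⟩ := exists_algHom_comp_eq f (f.comp τ.symm.toAlgHom)
  have hφψ : (φ.comp ψ).comp f = f := by
    rw [AlgHom.comp_assoc, hψ, ← AlgHom.comp_assoc, hφ]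
    ext m; simp
  refine ⟨AlgEquiv.ofBijective φ ⟨φ.injective, fun z => ?_⟩, fun m => congr($hφ m)⟩
  obtain ⟨w, rfl⟩ := (bijective_of_forall_mem_apply_eq (R := f.fieldRange) (φ.comp ψ)
    (by rintro _ ⟨m, rfl⟩; exact congr($hφψ m))).2 z
  exact ⟨ψ w, rfl⟩

end Extension

theorem involution_lifts_to_Einfty
    (k M : Type*) [Field k] [Field M] [Algebra k M]
    -- `M` is a finitely generated field extension of `k` of transcendence degree 1
    (htr : HasTrdegOne k M)
    -- the two intermediate fields `L` and `K`, with `M/L` and `M/K` finite and separable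
    (L K : IntermediateField k M)
    -- an algebraically closed extension `Ω` of `k` of transcendence degree 1
    (Ω : Type*) [Field Ω] [Algebra k Ω] [IsAlgClosed Ω]
    (htrΩ : HasTrdegOne k Ω)
    -- a fixed `k`-algebra embedding `PQ : M → Ω`
    (PQ : M →ₐ[k] Ω)
    -- the symmetry: an involution of `M` over `k` with `τ(L) = K`
    (τ : M ≃ₐ[k] M) (hτ2 : ∀ x : M, τ (τ x) = x)
    (hτL : L.map τ.toAlgHom = K) :
    ∃ (hM : ∀ x : M, PQ x ∈ Einfty L K PQ) (σ : Einfty L K PQ ≃ₐ[k] Einfty L K PQ),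
      ∀ x : M, (σ ⟨PQ x, hM x⟩ : Ω) = PQ (τ x) := by
  have hτK : K.map τ.toAlgHom = L := by
    rw [← hτL, map_map]
    convert map_id L
    exact AlgHom.ext hτ2
  have := isAlgebraic_fieldRange_of_hasTrdegOne htr htrΩ PQ
  obtain ⟨φ, hφ⟩ := exists_algEquiv_apply_eq PQ τ
  have hφ_map : ∀ F : IntermediateField k M,
      (F.map PQ).map φ.toAlgHom = (F.map τ.toAlgHom).map PQ := fun F => by
    rw [map_map, map_map]
    exact congrArg (map · F) (AlgHom.ext hφ)
  have hE : (Einfty L K PQ).map φ.toAlgHom = Einfty L K PQ := by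
    rw [Einfty, fieldRange_comp_val, fieldRange_comp_val]
    refine map_iSup_altTower_of_swap φ ?_ ?_ ?_
    · rw [hφ_map, hτK]
    · rw [hφ_map, hτL]
    · rw [AlgHom.fieldRange_eq_map, hφ_map, ← AlgHom.fieldRange_eq_map,
        AlgEquiv.fieldRange_eq_top]
  have hM : ∀ x : M, PQ x ∈ Einfty L K PQ := fun x => le_iSup_altTower _ _ _ ⟨x, rfl⟩
  exact ⟨hM, (intermediateFieldMap φ _).trans (equivOfEq hE), hφ⟩
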